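/- Let k be a field of characteristic zero, q ∈ k a primitive e-th root of unity, σ the automorphism of k[h] with σ(h) = qh, and f, g ∈ k[h] with f(0) ≠ 0. If g is fixed by σ and f divides g, then there exists s ∈ k[h^e] such that g = N(f)·s, where N(f) = lcm(f, σ(f), ..., σ^{e−1}(f)). -/

import Mathlib

/-!
Since `σ` fixes `g`, every `σⁱf` divides `g`, so `N(f) ∣ g`, say `g = N(f)·t`. The `σⁱf` are
permuted by `σ`, so `σN(f)` is again a common multiple and `N(f) ∣ σN(f)`; both have the same
degree and the same nonzero value at `0` (`N(f)` divides `∏ σⁱf`, which does not vanish at `0`),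
hence `σN(f) = N(f)`. Cancelling `N(f)` in `σg = g` gives `σt = t`, i.e. `qⁿtₙ = tₙ` for all `n`,
so `tₙ = 0` unless `e ∣ n`.
-/

open Polynomial

section CommSemiring

variable {R : Type*} [CommSemiring R]

theorem comp_C_mul_X_comp_C_mul_X (p : R[X]) (a b : R) :
    (p.comp (C a * X)).comp (C b * X) = p.comp (C (a * b) * X) := by
  rw [comp_assoc, mul_comp, C_comp, X_comp, ← mul_assoc, ← C_mul]

theorem comp_C_pow_mul_X_eq_self {p : R[X]} {a : R} (hp : p.comp (C a * X) = p) (i : ℕ) :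
    p.comp (C (a ^ i) * X) = p := by
  induction i with
  | zero => simp
  | succ i ih => rw [pow_succ, ← comp_C_mul_X_comp_C_mul_X, ih, hp]

theorem comp_dvd_comp {p r : R[X]} (h : p ∣ r) (u : R[X]) : p.comp u ∣ r.comp u :=
  map_dvd (compRingHom u) h

theorem comp_C_pow_mul_X_dvd_comp_C_mul_X {f N : R[X]} {q : R} {e : ℕ} (he : 0 < e)
    (hqe : q ^ e = 1) (hN : ∀ i < e, f.comp (C (q ^ i) * X) ∣ N) :
    ∀ i < e, f.comp (C (q ^ i) * X) ∣ N.comp (C q * X) := by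
  intro i hi
  obtain ⟨j, hj, hqj⟩ : ∃ j < e, q ^ (j + 1) = q ^ i := by
    rcases i with _ | j
    · exact ⟨e - 1, Nat.sub_lt he one_pos, by rw [Nat.sub_one_add_one he.ne', hqe, pow_zero]⟩
    · exact ⟨j, Nat.lt_of_succ_lt hi, rfl⟩
  have h := comp_dvd_comp (hN j hj) (C q * X)
  rwa [comp_C_mul_X_comp_C_mul_X, ← pow_succ, hqj] at h

end CommSemiring

section IsDomain

variable {R : Type*} [CommRing R] [IsDomain R]

theorem eq_of_dvd_of_natDegree_le_of_eval_eq {p r : R[X]} {x : R} (hpr : p ∣ r) (hr : r ≠ 0)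
    (hdeg : r.natDegree ≤ p.natDegree) (heval : r.eval x = p.eval x) (hp : p.eval x ≠ 0) :
    r = p := by
  obtain ⟨u, rfl⟩ := hpr
  have hp0 : p ≠ 0 := left_ne_zero_of_mul hr
  have hu0 : u ≠ 0 := right_ne_zero_of_mul hr
  have hu : u = C (u.coeff 0) := by
    rw [natDegree_mul hp0 hu0] at hdeg
    exact eq_C_of_natDegree_eq_zero (by omega)
  have hu1 : u.coeff 0 = 1 := by
    rw [eval_mul, hu, eval_C] at heval
    exact mul_left_cancel₀ hp (heval.trans (mul_one _).symm)
  rw [hu, hu1, C_1, mul_one]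

theorem contract_comp_X_pow_of_comp_C_mul_X_eq_self {p : R[X]} {q : R} {e : ℕ} (he : e ≠ 0)
    (hq : IsPrimitiveRoot q e) (hp : p.comp (C q * X) = p) :
    (contract e p).comp (X ^ e) = p := by
  rw [← expand_eq_comp_X_pow]
  ext n
  rw [coeff_expand (Nat.pos_of_ne_zero he), coeff_contract he]
  split_ifs with hn
  · rw [Nat.div_mul_cancel hn]
  · by_contra h0
    have hqn : q ^ n = 1 := by
      refine mul_left_cancel₀ (Ne.symm h0) ?_
      rw [mul_one, ← comp_C_mul_X_coeff, hp]
    exact hn ((hq.pow_eq_one_iff_dvd n).1 hqn)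

end IsDomain

theorem eq_Nf_mul_singular (k : Type*) [Field k] (q : k) (e : ℕ)
    (he : 0 < e) (hq : IsPrimitiveRoot q e) (f g : k[X]) (hf : f.eval 0 ≠ 0)
    (Nf : k[X])
    (hNdvd : ∀ i < e, f.comp (C (q ^ i) * X) ∣ Nf)
    (hNmin : ∀ m : k[X], (∀ i < e, f.comp (C (q ^ i) * X) ∣ m) → Nf ∣ m)
    (hg : g.comp (C q * X) = g) (hdvd : f ∣ g) :
    ∃ t : k[X], g = Nf * t.comp (X ^ e) := by
  have hq0 : q ≠ 0 := hq.ne_zero he.ne'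
  obtain ⟨t, ht⟩ : Nf ∣ g := hNmin g fun i _ => by
    have h := comp_dvd_comp hdvd (C (q ^ i) * X)
    rwa [comp_C_pow_mul_X_eq_self hg] at h
  have hN0 : Nf.eval 0 ≠ 0 := by
    obtain ⟨w, hw⟩ := hNmin (∏ i ∈ Finset.range e, f.comp (C (q ^ i) * X))
      fun i hi => Finset.dvd_prod_of_mem _ (Finset.mem_range.2 hi)
    have hprod : (∏ i ∈ Finset.range e, f.comp (C (q ^ i) * X)).eval 0 ≠ 0 := by
      rw [eval_prod]
      exact Finset.prod_ne_zero_iff.2 fun i _ => by simpa [eval_comp] using hf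
    exact fun h => hprod (by rw [hw, eval_mul, h, zero_mul])
  have hNne : Nf ≠ 0 := fun h => hN0 (by rw [h, eval_zero])
  have hNfix : Nf.comp (C q * X) = Nf := by
    refine eq_of_dvd_of_natDegree_le_of_eval_eq
      (hNmin _ (comp_C_pow_mul_X_dvd_comp_C_mul_X he hq.pow_eq_one hNdvd)) ?_ ?_ ?_ hN0
    · rw [Ne, comp_C_mul_X_eq_zero_iff (mem_nonZeroDivisors_of_ne_zero hq0)]
      exact hNne
    · simp [natDegree_comp, hq0]
    · simp [eval_comp]
  have htfix : t.comp (C q * X) = t := by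
    refine mul_left_cancel₀ hNne ?_
    rw [← ht, ← hg, ht, mul_comp, hNfix]
  exact ⟨contract e t, by rw [contract_comp_X_pow_of_comp_C_mul_X_eq_self he.ne' hq htfix, ht]⟩
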